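/- arXiv:1201.4662 — 3 statements merged into one kernel-verified Lean document; each statement's English description precedes it below -/
import Mathlib

section
/- Let M be a connected simple matroid of rank 3 on a finite ground set E, and let F be a flat of M with r(F) = 2 and |F| ≥ 3. Then the restriction M|F and the contraction M/F are both connected (i.e., every rank-2 flat of size at least 3 is a facet-defining flat of the base system of M). -/
open Set Matroid

namespace PaperWMO

variable {α : Type*}

/-- The rank of a set `X` in a matroid `M`: the size of a largest independent subset of `X`. -/
noncomputable def rk (M : Matroid α) (X : Set α) : ℕ :=
  sSup {n : ℕ | ∃ I, M.Indep I ∧ I ⊆ X ∧ I.ncard = n}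

/-- Contraction of the set `C` in the matroid `M`, defined by duality:
`M / C = (M✶ \ C)✶`, where deletion is restriction to the complement. -/
noncomputable def contract (M : Matroid α) (C : Set α) : Matroid α :=
  (M✶ ↾ (M.E \ C))✶

/-- A matroid is connected if its ground set is nonempty and it is not the direct sum of
two matroids on nonempty disjoint ground sets. -/
def Conn (M : Matroid α) : Prop :=
  M.E.Nonempty ∧ ¬ ∃ (M₁ M₂ : Matroid α) (h : Disjoint M₁.E M₂.E),
    M₁.E.Nonempty ∧ M₂.E.Nonempty ∧ M = Matroid.disjointSum M₁ M₂ h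

/-- A flat of `M`: a subset `F` of the ground set such that any superset
`B` with `F ⊆ B ⊆ M.E` of the same rank equals `F`. -/
def IsFlat (M : Matroid α) (F : Set α) : Prop :=
  F ⊆ M.E ∧ ∀ B : Set α, F ⊆ B → B ⊆ M.E → rk M B = rk M F → B = F

/-- A matroid is simple if every subset of the ground set with at most two elements
is independent. -/
def IsSimple (M : Matroid α) : Prop :=
  ∀ X ⊆ M.E, X.ncard ≤ 2 → M.Indep X

/-- A facet-defining flat of rank 2: a flat `F` of rank 2 such that
both the restriction `M ↾ F` and the contraction `M / F` are connected. -/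
def FacetFlat2 (M : Matroid α) (F : Set α) : Prop :=
  IsFlat M F ∧ rk M F = 2 ∧ Conn (M ↾ F) ∧ Conn (contract M F)

/-- `M` is 2-decomposable by the hyperplane `(A, a)_=`. -/
def TwoDecomposableBy (M : Matroid α) (A : Set α) (a : ℕ) : Prop :=
  (∃ N₁ : Matroid α, N₁.E = M.E ∧
      ∀ B : Set α, N₁.IsBase B ↔ M.IsBase B ∧ (B ∩ A).ncard ≤ a) ∧
  (∃ N₂ : Matroid α, N₂.E = M.E ∧
      ∀ B : Set α, N₂.IsBase B ↔ M.IsBase B ∧ a ≤ (B ∩ A).ncard) ∧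
  (∃ B : Set α, M.IsBase B ∧ a < (B ∩ A).ncard) ∧
  (∃ B : Set α, M.IsBase B ∧ (B ∩ A).ncard < a)

/-- A 3-partition in `M`: a partition of the ground set into three parts, each of size
at least two, such that no facet-defining flat of rank 2 meets all three parts, and the
union of any two parts has rank 3. -/
def ThreePartition (M : Matroid α) (A₁ A₂ A₃ : Set α) : Prop :=
  A₁ ∪ A₂ ∪ A₃ = M.E ∧
  Disjoint A₁ A₂ ∧ Disjoint A₂ A₃ ∧ Disjoint A₁ A₃ ∧
  2 ≤ A₁.ncard ∧ 2 ≤ A₂.ncard ∧ 2 ≤ A₃.ncard ∧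
  (¬ ∃ F : Set α, FacetFlat2 M F ∧
      (F ∩ A₁).Nonempty ∧ (F ∩ A₂).Nonempty ∧ (F ∩ A₃).Nonempty) ∧
  rk M (A₁ ∪ A₂) = 3 ∧ rk M (A₂ ∪ A₃) = 3 ∧ rk M (A₃ ∪ A₁) = 3

/-- The adjacency relation of the graph `g(A, B)` (with respect to the matroid `M`):
the vertex set is `B`, and distinct `x, y ∈ B` are adjacent iff some facet-defining flat
of rank 2 of `M` contains both `x` and `y` and meets `A`. -/
def gAdj (M : Matroid α) (A B : Set α) (x y : α) : Prop :=
  x ∈ B ∧ y ∈ B ∧ x ≠ y ∧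
    ∃ F : Set α, FacetFlat2 M F ∧ x ∈ F ∧ y ∈ F ∧ (F ∩ A).Nonempty

/-- `C` is the vertex set of a connected component of the graph `g(S, V)`. -/
def IsGComponent (M : Matroid α) (S V C : Set α) : Prop :=
  ∃ x ∈ V, C = {y | y ∈ V ∧ Relation.ReflTransGen (gAdj M S V) x y}

/-! A splitting `N = N₁ ⊕ N₂` lets independent sets of `N₁` and of `N₂` be combined freely.
In `M ↾ F` every pair of points is independent by simplicity, so a splitting would produce an
independent triple among three points of `F`, exceeding `r(F) = 2`. Since `F` is a flat, `M ／ F`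
is loopless, and it has rank at most `r(M) - r(F) = 1`, so a splitting would produce an
independent pair. -/

theorem cast_rk (M : Matroid α) [M.RankFinite] (X : Set α) : (rk M X : ℕ∞) = M.eRk X := by
  obtain ⟨I, hI⟩ := M.exists_isBasis' X
  have hmax : IsGreatest {n : ℕ | ∃ J, M.Indep J ∧ J ⊆ X ∧ J.ncard = n} I.ncard := by
    refine ⟨⟨I, hI.indep, hI.subset, rfl⟩, ?_⟩
    rintro _ ⟨J, hJ, hJX, rfl⟩
    have := hJ.encard_le_eRk_of_subset hJX
    rw [← hI.encard_eq_eRk, ← hJ.finite.cast_ncard_eq, ← hI.indep.finite.cast_ncard_eq] at this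
    exact_mod_cast this
  rw [rk, hmax.csSup_eq, hI.indep.finite.cast_ncard_eq, hI.encard_eq_eRk]

theorem IsFlat.closure_eq {M : Matroid α} [M.RankFinite] {F : Set α} (hF : IsFlat M F) :
    M.closure F = F := by
  refine hF.2 _ (M.subset_closure F hF.1) (M.closure_subset_ground F) ?_
  exact_mod_cast (cast_rk M _).trans ((M.eRk_closure_eq F).trans (cast_rk M F).symm)

theorem eRank_contract_add_eRk_le (M : Matroid α) (C : Set α) :
    (M ／ C).eRank + M.eRk C ≤ M.eRank := by
  obtain ⟨B, hB⟩ := (M ／ C).exists_isBase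
  obtain ⟨J, hJ⟩ := M.exists_isBasis' C
  obtain ⟨hBJ, hCB⟩ := hJ.contract_indep_iff.1 hB.indep
  rw [← hB.encard_eq_eRank, ← hJ.encard_eq_eRk,
    ← encard_union_eq (hCB.symm.mono_right hJ.subset)]
  exact hBJ.encard_le_eRank

def IsSeparator (N : Matroid α) (A : Set α) : Prop :=
  ∀ I J, N.Indep I → N.Indep J → I ⊆ A → J ⊆ N.E \ A → N.Indep (I ∪ J)

theorem isSeparator_disjointSum (M₁ M₂ : Matroid α) (h : Disjoint M₁.E M₂.E) :
    IsSeparator (M₁.disjointSum M₂ h) M₁.E := by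
  intro I J hI hJ hIA hJA
  have hJ₂ : J ⊆ M₂.E := by
    simpa [union_sdiff_left, h.sdiff_eq_right] using hJA
  have hJ₁ : J ∩ M₁.E = ∅ := (h.symm.mono_left hJ₂).inter_eq
  have hI₂ : I ∩ M₂.E = ∅ := (h.mono_left hIA).inter_eq
  rw [disjointSum_indep_iff] at hI hJ ⊢
  refine ⟨?_, ?_, union_subset hI.2.2 hJ.2.2⟩
  · rw [union_inter_distrib_right, hJ₁, union_empty]
    exact hI.1
  · rw [union_inter_distrib_right, hI₂, empty_union]
    exact hJ.2.1

theorem conn_of_forall_not_isSeparator {N : Matroid α} (hne : N.E.Nonempty)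
    (h : ∀ A ⊆ N.E, A.Nonempty → (N.E \ A).Nonempty → ¬ IsSeparator N A) : Conn N := by
  refine ⟨hne, ?_⟩
  rintro ⟨M₁, M₂, hd, h₁, h₂, rfl⟩
  refine h M₁.E (by simp) h₁ ?_ (isSeparator_disjointSum M₁ M₂ hd)
  simpa [hd.sdiff_eq_right] using h₂

theorem conn_of_loopless_of_eRank_le_one (N : Matroid α) [N.Loopless] (hne : N.E.Nonempty)
    (hr : N.eRank ≤ 1) : Conn N := by
  refine conn_of_forall_not_isSeparator hne fun A hA ⟨x, hx⟩ ⟨y, hyE, hyA⟩ hsep => ?_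
  have hxy : x ≠ y := by rintro rfl; exact hyA hx
  have hind := hsep {x} {y} (N.isNonloop_of_loopless (hA hx)).indep
    (N.isNonloop_of_loopless hyE).indep (singleton_subset_iff.2 hx)
    (singleton_subset_iff.2 ⟨hyE, hyA⟩)
  have := hind.encard_le_eRank.trans hr
  rw [singleton_union, encard_pair hxy] at this
  norm_num at this

theorem conn_of_indep_pair_of_eRank_le_two (N : Matroid α)
    (hpair : ∀ x ∈ N.E, ∀ y ∈ N.E, N.Indep {x, y}) (hr : N.eRank ≤ 2)
    (hcard : 3 ≤ N.E.encard) : Conn N := by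
  have hsingle : ∀ x ∈ N.E, N.Indep {x} := fun x hx => by simpa using hpair x hx x hx
  have hne : N.E.Nonempty := by
    rw [← encard_pos]
    exact lt_of_lt_of_le (by norm_num) hcard
  refine conn_of_forall_not_isSeparator hne fun A hA ⟨x, hx⟩ ⟨y, hyE, hyA⟩ hsep => ?_
  have hxy : x ≠ y := by rintro rfl; exact hyA hx
  obtain ⟨z, hzE, hz⟩ : (N.E \ {x, y}).Nonempty := by
    rw [nonempty_iff_ne_empty, Ne, sdiff_eq_empty]
    intro hsub
    have := hcard.trans ((encard_le_encard hsub).trans_eq (encard_pair hxy))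
    norm_num at this
  simp only [mem_insert_iff, mem_singleton_iff, not_or] at hz
  have hind : N.Indep {x, y, z} := by
    by_cases hzA : z ∈ A
    · rw [← insert_comm y x, ← union_singleton]
      exact hsep {x, z} {y} (hpair x (hA hx) z hzE) (hsingle y hyE) (pair_subset hx hzA)
        (singleton_subset_iff.2 ⟨hyE, hyA⟩)
    · rw [← singleton_union]
      exact hsep {x} {y, z} (hsingle x (hA hx)) (hpair y hyE z hzE) (singleton_subset_iff.2 hx)
        (pair_subset ⟨hyE, hyA⟩ ⟨hzE, hzA⟩)
  have := hind.encard_le_eRank.trans hr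
  rw [encard_eq_three.2 ⟨x, y, z, hxy, Ne.symm hz.1, Ne.symm hz.2, rfl⟩] at this
  norm_num at this

theorem rank_two_flat_facet_general (M : Matroid α) (hfin : M.E.Finite)
    (hsimple : IsSimple M) (hrank : rk M M.E = 3)
    (F : Set α) (hflat : IsFlat M F) (hrF : rk M F = 2) (hcard : 3 ≤ F.ncard) :
    Conn (M ↾ F) ∧ Conn (contract M F) := by
  have : M.Finite := ⟨hfin⟩
  have hrkF : M.eRk F = 2 := by rw [← cast_rk, hrF]; rfl
  have hrkM : M.eRank = 3 := by rw [← eRk_ground, ← cast_rk, hrank]; rfl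
  constructor
  · refine conn_of_indep_pair_of_eRank_le_two _ (fun x hx y hy => ?_) hrkF.le ?_
    · refine restrict_indep_iff.2 ⟨hsimple _ (pair_subset (hflat.1 hx) (hflat.1 hy)) ?_,
        pair_subset hx hy⟩
      exact (ncard_insert_le x {y}).trans (by simp)
    · rw [restrict_ground_eq, ← (hfin.subset hflat.1).cast_ncard_eq]
      exact_mod_cast hcard
  · have : (M ／ F).Loopless := loopless_iff_forall_isNonloop.2 fun e he => by
      rwa [contract_isNonloop_iff, hflat.closure_eq]
    -- `contract M F` is by definition Mathlib's `M ／ F`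
    refine conn_of_loopless_of_eRank_le_one (M ／ F) ?_ ?_
    · rw [contract_ground, sdiff_nonempty]
      intro hEF
      rw [hflat.1.antisymm hEF] at hrF
      omega
    · have h := eRank_contract_add_eRk_le M F
      rw [hrkF, hrkM, show (3 : ℕ∞) = 1 + 2 by norm_num] at h
      exact (ENat.add_le_add_iff_right (by simp)).1 h

/-- For a connected simple matroid of rank 3, every rank-2 flat of size at least 3 is
facet-defining: both the restriction and the contraction are connected. -/
theorem rank_two_flat_facet (M : Matroid α) (hfin : M.E.Finite)
    (hconn : Conn M) (hsimple : IsSimple M) (hrank : rk M M.E = 3)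
    (F : Set α) (hflat : IsFlat M F) (hrF : rk M F = 2) (hcard : 3 ≤ F.ncard) :
    Conn (M ↾ F) ∧ Conn (contract M F) :=
  rank_two_flat_facet_general M hfin hsimple hrank F hflat hrF hcard

end PaperWMO
end

section
/- Let M be a connected simple matroid of rank 3 on a finite ground set E with |E| ≥ 5. Suppose x, y, z ∈ E are three distinct elements such that none of the pairs {x,y}, {y,z}, {z,x} is contained in any facet-defining flat of rank 2 of M. Then M is 2-decomposable by the hyperplane ({x,y,z},2)_=. -/
/-!
If two elements `a, b` of `{x, y, z}` together with a third element `w` were dependent, then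
`w ∈ cl {a, b}`, a rank-2 flat with at least three points. In a simple matroid of rank 3 such a
flat is facet-defining: its restriction is `U₂,ₙ` and its contraction is a loopless matroid of
rank 1, and both are connected since any two of their elements lie on a common circuit. Hence
every two of `x, y, z` together with any other element form a base. It follows that the bases
meeting `{x, y, z}` in at least two elements are exactly the 3-sets doing so, and that deleting
the single base `{x, y, z}` keeps basis exchange intact, which gives the two matroids. Two
elements outside `{x, y, z}`, available as `|E| ≥ 5`, extend to a base meeting it at most once.
-/

open Set Matroid

namespace PaperWMO

variable {α : Type*}

section Rank

variable {M : Matroid α} [M.Finite] {I J X B F : Set α}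

lemma ncard_le_rk_of_indep (hJ : M.Indep J) (hJX : J ⊆ X) : J.ncard ≤ rk M X :=
  le_csSup ⟨M.E.ncard, fun _ ⟨_, hI, _, hIn⟩ =>
    hIn ▸ ncard_le_ncard hI.subset_ground M.ground_finite⟩ ⟨J, hJ, hJX, rfl⟩

lemma rk_eq_ncard_of_isBasis (hI : M.IsBasis I X) : rk M X = I.ncard := by
  refine le_antisymm (csSup_le ⟨0, ∅, M.empty_indep, empty_subset X, ncard_empty α⟩ ?_)
    (ncard_le_rk_of_indep hI.indep hI.subset)
  rintro _ ⟨J, hJ, hJX, rfl⟩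
  obtain ⟨J', hJ', hJJ'⟩ := hJ.subset_isBasis_of_subset hJX hI.subset_ground
  calc J.ncard ≤ J'.ncard := ncard_le_ncard hJJ' hJ'.indep.finite
    _ = I.ncard := hJ'.isBase_restrict.ncard_eq_ncard_of_isBase hI.isBase_restrict

lemma ncard_eq_rk_of_isBase (hB : M.IsBase B) : B.ncard = rk M M.E :=
  (rk_eq_ncard_of_isBasis hB.isBasis_ground).symm

lemma isBase_of_indep_of_ncard_eq_rk (hI : M.Indep I) (hIr : I.ncard = rk M M.E) :
    M.IsBase I := by
  obtain ⟨B, hB, hIB⟩ := hI.exists_isBase_superset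
  rwa [eq_of_subset_of_ncard_le hIB (by rw [hIr, ncard_eq_rk_of_isBase hB]) hB.finite]

lemma isFlat_of_matroidIsFlat (hF : M.IsFlat F) : IsFlat M F := by
  refine ⟨hF.subset_ground, fun X hFX hXE hrk => subset_antisymm ?_ hFX⟩
  obtain ⟨I, hI⟩ := M.exists_isBasis F hF.subset_ground
  obtain ⟨J, hJ, hIJ⟩ := hI.indep.subset_isBasis_of_subset (hI.subset.trans hFX) hXE
  rw [rk_eq_ncard_of_isBasis hJ, rk_eq_ncard_of_isBasis hI] at hrk
  obtain rfl : I = J := eq_of_subset_of_ncard_le hIJ hrk.le hJ.indep.finite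
  calc X ⊆ M.closure I := hJ.subset_closure
    _ = F := by rw [hI.closure_eq_closure, hF.closure]

end Rank

lemma conn_of_forall_isCircuit {M : Matroid α} (hne : M.E.Nonempty)
    (h : ∀ e ∈ M.E, ∀ f ∈ M.E, e ≠ f → ∃ C, M.IsCircuit C ∧ e ∈ C ∧ f ∈ C) : Conn M := by
  refine ⟨hne, ?_⟩
  rintro ⟨M₁, M₂, hdj, ⟨e₁, he₁⟩, ⟨e₂, he₂⟩, rfl⟩
  have hE : (M₁.disjointSum M₂ hdj).E = M₁.E ∪ M₂.E := disjointSum_ground_eq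
  obtain ⟨C, hC, he₁C, he₂C⟩ :=
    h e₁ (hE ▸ Or.inl he₁) e₂ (hE ▸ Or.inr he₂) (hdj.ne_of_mem he₁ he₂)
  -- each side of `C` is a proper subset of `C`, hence independent, and then so is `C` itself
  have h₁ := hC.ssubset_indep ((ssubset_iff_of_subset inter_subset_left).2
    ⟨e₂, he₂C, fun h => hdj.notMem_of_mem_right he₂ h.2⟩)
  have h₂ := hC.ssubset_indep ((ssubset_iff_of_subset inter_subset_left).2
    ⟨e₁, he₁C, fun h => hdj.notMem_of_mem_left he₁ h.2⟩)
  rw [disjointSum_indep_iff] at h₁ h₂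
  refine hC.not_indep (disjointSum_indep_iff.2 ⟨?_, ?_, hE ▸ hC.subset_ground⟩)
  · simpa [inter_assoc] using h₁.1
  · simpa [inter_assoc] using h₂.2.1

section RankThree

variable {M : Matroid α} [M.Finite] {I F S : Set α} {w : α}

lemma conn_restrict_of_rk_eq_two (hsimple : IsSimple M) (hF : F ⊆ M.E) (hrk : rk M F = 2)
    (hF3 : 2 < F.ncard) : Conn (M ↾ F) := by
  refine conn_of_forall_isCircuit (M := M ↾ F)
    (nonempty_of_ncard_ne_zero (by rw [restrict_ground_eq]; omega)) fun e he f hf hef => ?_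
  rw [restrict_ground_eq] at he hf
  obtain ⟨g, hg, hgef⟩ := exists_mem_notMem_of_ncard_lt_ncard (s := {e, f}) (t := F)
    (by rw [ncard_pair hef]; omega)
  have hC : insert g {e, f} ⊆ F := insert_subset hg (pair_subset he hf)
  have hC3 : (insert g {e, f} : Set α).ncard = 3 := by
    rw [ncard_insert_of_notMem hgef, ncard_pair hef]
  refine ⟨insert g {e, f}, ?_, by simp, by simp⟩
  rw [restrict_isCircuit_iff hF, isCircuit_iff_dep_forall_sdiff_singleton_indep]
  refine ⟨⟨⟨fun hi => ?_, hC.trans hF⟩,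
    fun c hc => hsimple _ (sdiff_subset.trans (hC.trans hF)) ?_⟩, hC⟩
  · have := ncard_le_rk_of_indep hi hC
    omega
  · rw [ncard_sdiff_singleton_of_mem hc, hC3]

lemma conn_contract_closure (hrank : rk M M.E = 3) (hI : M.Indep I) (hI2 : I.ncard = 2) :
    Conn (contract M (M.closure I)) := by
  show Conn (M ／ M.closure I)
  have hrkI : rk M (M.closure I) = 2 := by rw [rk_eq_ncard_of_isBasis hI.isBasis_closure, hI2]
  have hnonloop : ∀ e ∈ M.E \ M.closure I, (M ／ M.closure I).Indep {e} := fun e he =>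
    (contract_isNonloop_iff.2 (by rwa [closure_closure])).indep
  refine conn_of_forall_isCircuit ?_ fun e he f hf hef => ⟨{e, f}, ?_, by simp, by simp⟩
  · obtain ⟨B, hB⟩ := M.exists_isBase
    obtain ⟨b, hb, hbI⟩ : ∃ b ∈ B, b ∉ M.closure I := by
      by_contra! hBI
      have := ncard_le_rk_of_indep hB.indep hBI
      rw [ncard_eq_rk_of_isBase hB, hrank, hrkI] at this
      omega
    exact ⟨b, by simpa using ⟨hB.subset_ground hb, hbI⟩⟩
  rw [contract_ground] at he hf
  rw [isCircuit_iff_dep_forall_sdiff_singleton_indep]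
  refine ⟨⟨fun hi => ?_, by simpa [pair_subset_iff] using ⟨he, hf⟩⟩, ?_⟩
  · have hdisj : Disjoint {e, f} I := by
      simpa using ⟨fun h => he.2 (M.subset_closure I hI.subset_ground h),
        fun h => hf.2 (M.subset_closure I hI.subset_ground h)⟩
    have hi' := (hI.isBasis_closure.contract_indep_iff.1 hi).1
    have := ncard_le_rk_of_indep hi' hi'.subset_ground
    rw [ncard_union_eq hdisj (toFinite _) hI.finite, ncard_pair hef, hI2, hrank] at this
    omega
  · rintro c (rfl | rfl)
    · rw [pair_sdiff_left hef]; exact hnonloop f hf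
    · rw [pair_sdiff_right hef]; exact hnonloop e he

lemma facetFlat2_closure (hsimple : IsSimple M) (hrank : rk M M.E = 3) (hI : M.Indep I)
    (hI2 : I.ncard = 2) (hw : w ∈ M.closure I \ I) : FacetFlat2 M (M.closure I) := by
  have hrk : rk M (M.closure I) = 2 := by rw [rk_eq_ncard_of_isBasis hI.isBasis_closure, hI2]
  have hcard : 2 < (M.closure I).ncard := by
    calc 2 < (insert w I).ncard := by rw [ncard_insert_of_notMem hw.2 hI.finite, hI2]; omega
      _ ≤ (M.closure I).ncard :=
        ncard_le_ncard (insert_subset hw.1 (M.subset_closure I hI.subset_ground))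
          (M.set_finite _ (M.closure_subset_ground I))
  exact ⟨isFlat_of_matroidIsFlat (M.isFlat_closure I), hrk,
    conn_restrict_of_rk_eq_two hsimple (M.closure_subset_ground I) hrk hcard,
    conn_contract_closure hrank hI hI2⟩

lemma isBase_insert_of_forall_facetFlat2_not_subset (hsimple : IsSimple M)
    (hrank : rk M M.E = 3) (hS : S ⊆ M.E) (hS2 : S.ncard = 2)
    (hfacet : ∀ F, FacetFlat2 M F → ¬ S ⊆ F) (hw : w ∈ M.E \ S) : M.IsBase (insert w S) := by
  have hSi : M.Indep S := hsimple S hS hS2.le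
  have hwS : w ∉ M.closure S := fun hcl =>
    hfacet _ (facetFlat2_closure hsimple hrank hSi hS2 ⟨hcl, hw.2⟩) (M.subset_closure S hS)
  refine isBase_of_indep_of_ncard_eq_rk ((hSi.insert_indep_iff_of_notMem hw.2).2 ⟨hw.1, hwS⟩) ?_
  rw [ncard_insert_of_notMem hw.2 hSi.finite, hS2, hrank]

lemma exists_isBase_ncard_inter_lt_two (hsimple : IsSimple M) (hrank : rk M M.E = 3)
    {A : Set α} (hA : 2 ≤ (M.E \ A).ncard) : ∃ B, M.IsBase B ∧ (B ∩ A).ncard < 2 := by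
  obtain ⟨S, hS, hS2⟩ := exists_subset_card_eq hA
  obtain ⟨B, hB, hSB⟩ := (hsimple S (hS.trans sdiff_subset) hS2.le).exists_isBase_superset
  refine ⟨B, hB, ?_⟩
  have hBA : B ∩ A ⊆ B \ S := fun b hb => ⟨hb.1, fun hbS => (hS hbS).2 hb.2⟩
  have := ncard_le_ncard hBA (hB.finite.subset sdiff_subset)
  rw [ncard_sdiff hSB (hB.finite.subset hSB), ncard_eq_rk_of_isBase hB, hrank, hS2] at this
  omega

end RankThree

def PairsExtendToBases (M : Matroid α) (A : Set α) : Prop :=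
  ∀ S ⊆ A, S.ncard = 2 → ∀ w ∈ M.E \ S, M.IsBase (insert w S)

section PairsExtendToBases

variable {M : Matroid α} {A T : Set α}

lemma PairsExtendToBases.isBase (hA : PairsExtendToBases M A) (hT : T ⊆ M.E)
    (hT3 : T.ncard = 3) (hTA : 2 ≤ (T ∩ A).ncard) : M.IsBase T := by
  obtain ⟨S, hS, hS2⟩ := exists_subset_card_eq hTA
  obtain ⟨w, hw⟩ : ∃ w, T \ S = {w} := by
    rw [← ncard_eq_one, ncard_sdiff (hS.trans inter_subset_left) (finite_of_ncard_pos (by omega)),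
      hT3, hS2]
  have hwT : w ∈ T \ S := hw ▸ rfl
  convert hA S (hS.trans inter_subset_right) hS2 w ⟨hT hwT.1, hwT.2⟩
  rw [← union_singleton, ← hw]
  exact (union_sdiff_cancel (hS.trans inter_subset_left)).symm

variable [M.Finite]

lemma PairsExtendToBases.exchangeProperty_ne (hrank : rk M M.E = 3)
    (hA : PairsExtendToBases M A) : ExchangeProperty (fun B => M.IsBase B ∧ B ≠ A) := by
  rintro B₁ B₂ ⟨hB₁, -⟩ ⟨hB₂, hB₂A⟩ e he
  obtain ⟨f, hf, hB⟩ := hB₁.exchange hB₂ he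
  by_cases hfA : insert f (B₁ \ {e}) = A
  swap
  · exact ⟨f, hf, hB, hfA⟩
  -- `A` was reached; exchanging in another element `f'` of `B₂ \ B₁` leaves `A`
  obtain ⟨f', hf', hf'f⟩ : ∃ f' ∈ B₂ \ B₁, f' ≠ f := by
    by_contra! h
    refine hB₂A (hfA ▸ hB₂.eq_of_subset_isBase hB fun b hb => ?_)
    by_cases hbB₁ : b ∈ B₁
    · exact .inr ⟨hbB₁, fun hbe => he.2 (hbe ▸ hb)⟩
    · exact .inl (h b ⟨hb, hbB₁⟩)
  have hf'A : f' ∉ A := by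
    rw [← hfA]
    rintro (h | h)
    exacts [hf'f h, hf'.2 h.1]
  have hT : insert f' (B₁ \ {e}) ⊆ M.E :=
    insert_subset (hB₂.subset_ground hf'.1) (sdiff_subset.trans hB₁.subset_ground)
  refine ⟨f', hf', hA.isBase hT ?_ ?_, fun h => hf'A (h ▸ mem_insert _ _)⟩
  · rw [ncard_exchange hf'.2 he.1, ncard_eq_rk_of_isBase hB₁, hrank]
  · have hsub : B₁ \ {e} ⊆ insert f' (B₁ \ {e}) ∩ A :=
      subset_inter (subset_insert _ _) (hfA ▸ subset_insert _ _)
    have := ncard_le_ncard hsub ((M.set_finite _ hT).inter_of_left A)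
    rwa [ncard_sdiff_singleton_of_mem he.1, ncard_eq_rk_of_isBase hB₁, hrank] at this

lemma PairsExtendToBases.exchangeProperty_two_le (hrank : rk M M.E = 3)
    (hA : PairsExtendToBases M A) :
    ExchangeProperty (fun B => M.IsBase B ∧ 2 ≤ (B ∩ A).ncard) := by
  rintro B₁ B₂ ⟨hB₁, hB₁A⟩ ⟨hB₂, hB₂A⟩ e he
  by_cases hnew : ∃ f ∈ B₂ \ B₁, f ∈ A
  · obtain ⟨f, hf, hfA⟩ := hnew
    have hT : insert f (B₁ \ {e}) ⊆ M.E :=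
      insert_subset (hB₂.subset_ground hf.1) (sdiff_subset.trans hB₁.subset_ground)
    have hTA : 2 ≤ (insert f (B₁ \ {e}) ∩ A).ncard := by
      have hsub : insert f ((B₁ ∩ A) \ {e}) ⊆ insert f (B₁ \ {e}) ∩ A :=
        insert_subset ⟨mem_insert _ _, hfA⟩ fun b hb => ⟨.inr ⟨hb.1.1, hb.2⟩, hb.1.2⟩
      have := ncard_le_ncard hsub ((M.set_finite _ hT).inter_of_left A)
      rw [ncard_insert_of_notMem (fun h => hf.2 h.1.1)
        (hB₁.finite.subset fun b hb => hb.1.1)] at this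
      have := pred_ncard_le_ncard_sdiff_singleton (B₁ ∩ A) e
      omega
    refine ⟨f, hf, hA.isBase hT ?_ hTA, hTA⟩
    rw [ncard_exchange hf.2 he.1, ncard_eq_rk_of_isBase hB₁, hrank]
  · obtain ⟨f, hf, hB⟩ := hB₁.exchange hB₂ he
    -- no element of `B₂ ∩ A` is new, so any exchange keeps at least `|B₂ ∩ A|` elements of `A`
    have hsub : B₂ ∩ A ⊆ insert f (B₁ \ {e}) ∩ A := fun b hb =>
      ⟨.inr ⟨by_contra fun hbB₁ => hnew ⟨b, ⟨hb.1, hbB₁⟩, hb.2⟩,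
        fun hbe => he.2 (hbe ▸ hb.1)⟩, hb.2⟩
    exact ⟨f, hf, hB, hB₂A.trans (ncard_le_ncard hsub (hB.finite.inter_of_left A))⟩

lemma ncard_inter_le_two_iff_ne (hrank : rk M M.E = 3) (hA : M.IsBase A) {B : Set α}
    (hB : M.IsBase B) : (B ∩ A).ncard ≤ 2 ↔ B ≠ A := by
  refine ⟨?_, fun hBA => not_lt.1 fun h2 => hBA ?_⟩
  · rintro h2 rfl
    rw [inter_self, ncard_eq_rk_of_isBase hA, hrank] at h2
    omega
  · refine hB.eq_of_subset_isBase hA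
      (inter_eq_left.1 (eq_of_subset_of_ncard_le inter_subset_left ?_ hB.finite))
    rw [ncard_eq_rk_of_isBase hB, hrank]
    omega

lemma PairsExtendToBases.twoDecomposableBy (hrank : rk M M.E = 3)
    (hA : PairsExtendToBases M A) (hAE : A ⊆ M.E) (hA3 : A.ncard = 3)
    (hlow : ∃ B, M.IsBase B ∧ (B ∩ A).ncard < 2) :
    TwoDecomposableBy M A 2 := by
  have hAB : M.IsBase A := hA.isBase hAE hA3 (by rw [inter_self, hA3]; omega)
  obtain ⟨B₀, hB₀, hB₀A⟩ := hlow
  refine ⟨?_, ?_, ⟨A, hAB, by rw [inter_self, hA3]; omega⟩, ⟨B₀, hB₀, hB₀A⟩⟩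
  · refine ⟨Matroid.ofIsBaseOfFinite M.ground_finite _ ⟨B₀, hB₀, ?_⟩
      (hA.exchangeProperty_ne hrank) (fun B hB => hB.1.subset_ground), rfl, fun B => ?_⟩
    · exact and_congr_right fun hB => (ncard_inter_le_two_iff_ne hrank hAB hB).symm
    · rintro rfl
      rw [inter_self, hA3] at hB₀A
      omega
  · exact ⟨Matroid.ofIsBaseOfFinite M.ground_finite _ ⟨A, hAB, by rw [inter_self, hA3]; omega⟩
      (hA.exchangeProperty_two_le hrank) (fun B hB => hB.1.subset_ground), rfl, fun B => Iff.rfl⟩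

end PairsExtendToBases

lemma pair_subset_of_subset_triple {S : Set α} {x y z : α} (hS : S ⊆ {x, y, z})
    (hS2 : S.ncard = 2) : {x, y} ⊆ S ∨ {y, z} ⊆ S ∨ {z, x} ⊆ S := by
  obtain ⟨a, b, hab, rfl⟩ := ncard_eq_two.1 hS2
  rw [insert_subset_iff, singleton_subset_iff] at hS
  obtain ⟨ha | ha | ha, hb | hb | hb⟩ := hS <;> subst ha hb <;> simp_all [pair_comm]

theorem twoDecomposable_of_triangle_general (M : Matroid α) (hfin : M.E.Finite)
    (hsimple : IsSimple M) (hrank : rk M M.E = 3)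
    (hcard : 5 ≤ M.E.ncard)
    (x y z : α) (hx : x ∈ M.E) (hy : y ∈ M.E) (hz : z ∈ M.E)
    (hxy : x ≠ y) (hyz : y ≠ z) (hzx : z ≠ x)
    (hpairs : ∀ F : Set α, FacetFlat2 M F →
      ¬ ({x, y} : Set α) ⊆ F ∧ ¬ ({y, z} : Set α) ⊆ F ∧ ¬ ({z, x} : Set α) ⊆ F) :
    TwoDecomposableBy M {x, y, z} 2 := by
  have : M.Finite := ⟨hfin⟩
  have hAE : {x, y, z} ⊆ M.E := insert_subset hx (pair_subset hy hz)
  have hA3 : ({x, y, z} : Set α).ncard = 3 :=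
    ncard_eq_three.2 ⟨x, y, z, hxy, hzx.symm, hyz, rfl⟩
  have hA : PairsExtendToBases M {x, y, z} := fun S hSA hS2 w hw =>
    isBase_insert_of_forall_facetFlat2_not_subset hsimple hrank (hSA.trans hAE) hS2
      (fun F hF hSF => by
        obtain ⟨hxyF, hyzF, hzxF⟩ := hpairs F hF
        rcases pair_subset_of_subset_triple hSA hS2 with h | h | h
        exacts [hxyF (h.trans hSF), hyzF (h.trans hSF), hzxF (h.trans hSF)]) hw
  refine hA.twoDecomposableBy hrank hAE hA3 (exists_isBase_ncard_inter_lt_two hsimple hrank ?_)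
  rw [ncard_sdiff hAE, hA3]
  omega

/-- If `|E| ≥ 5` and `x, y, z` are three distinct elements no pair of which is contained
in a facet-defining flat of rank 2, then `M` is 2-decomposable by `({x,y,z},2)_=`. -/
theorem twoDecomposable_of_triangle (M : Matroid α) (hfin : M.E.Finite)
    (hconn : Conn M) (hsimple : IsSimple M) (hrank : rk M M.E = 3)
    (hcard : 5 ≤ M.E.ncard)
    (x y z : α) (hx : x ∈ M.E) (hy : y ∈ M.E) (hz : z ∈ M.E)
    (hxy : x ≠ y) (hyz : y ≠ z) (hzx : z ≠ x)
    (hpairs : ∀ F : Set α, FacetFlat2 M F →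
      ¬ ({x, y} : Set α) ⊆ F ∧ ¬ ({y, z} : Set α) ⊆ F ∧ ¬ ({z, x} : Set α) ⊆ F) :
    TwoDecomposableBy M {x, y, z} 2 :=
  twoDecomposable_of_triangle_general M hfin hsimple hrank hcard x y z hx hy hz hxy hyz hzx hpairs

end PaperWMO
end

section
/- Let M be a connected simple matroid of rank 3 on a finite ground set E, and let M' be a connected matroid on E whose every base is a base of M. Suppose A ⊆ E is a flat of M' with r_{M'}(A) = 1, let B ⊆ E be a nonempty set disjoint from A, and let C ⊆ B be a nonempty set of vertices of the graph g(A,B) on which the induced subgraph of g(A,B) is connected. Then r_{M'}(A ∪ C) = 2. -/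
open Set Matroid

/-!
Since every base of `M'` is a base of `M`, every `M'`-independent set is `M`-independent, and `M'`
has no loops because it is connected. Let `u, v` be adjacent in `g(A, B)` through a facet flat `F`
meeting `A` in `a`. As `A` is a flat of `M'` not containing `u`, the pair `{u, a}` is
`M'`-independent, and `v` lies in its `M'`-closure: otherwise `{u, a, v}` would be an
`M`-independent subset of `F`, which has `M`-rank `2`. Following paths in `C` from a vertex `c`
gives `A ∪ C ⊆ cl_{M'}(A ∪ {c})`, so `r_{M'}(A ∪ C) = r_{M'}(A) + 1 = 2`.
-/

namespace Matroid

variable {α : Type*} {M M' : Matroid α} {I F X : Set α} {c e v y : α}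

lemma IsLoop.eq_disjointSum (he : M.IsLoop e) :
    M = (M ↾ {e}).disjointSum (M ↾ (M.E \ {e}))
      (by simp only [restrict_ground_eq]; exact disjoint_sdiff_right) := by
  have heE := singleton_subset_iff.2 he.mem_ground
  refine ext_indep (by simp [union_sdiff_cancel heE]) fun I hIE ↦ ?_
  simp only [disjointSum_indep_iff, restrict_indep_iff, restrict_ground_eq, inter_subset_right,
    and_true, union_sdiff_cancel heE, hIE]
  refine ⟨fun hI ↦ ⟨hI.subset inter_subset_left, hI.subset inter_subset_left⟩,
    fun ⟨he', hI⟩ ↦ ?_⟩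
  have heI : e ∉ I := fun heI ↦ he.notMem_of_indep he' ⟨heI, mem_singleton e⟩
  rwa [inter_eq_left.2 (subset_sdiff_singleton hIE heI)] at hI

lemma Indep.of_forall_isBase_imp (hsub : ∀ B, M'.IsBase B → M.IsBase B) (hI : M'.Indep I) :
    M.Indep I := by
  obtain ⟨B, hB, hIB⟩ := hI.exists_isBase_superset
  exact (hsub B hB).indep.subset hIB

lemma Indep.mem_closure_of_insert_subset_of_eRk_le (hsub : ∀ B, M'.IsBase B → M.IsBase B)
    (hI : M'.Indep I) (hIfin : I.Finite) (hIF : insert v I ⊆ F) (hF : M.eRk F ≤ I.encard)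
    (hv : v ∈ M'.E) : v ∈ M'.closure I := by
  by_contra hvI
  have hvI' : v ∉ I := fun h ↦ hvI (M'.mem_closure_of_mem h hI.subset_ground)
  have hindep : M.Indep (insert v I) :=
    ((hI.insert_indep_iff_of_notMem hvI').2 ⟨hv, hvI⟩).of_forall_isBase_imp hsub
  have hle := (hindep.encard_le_eRk_of_subset hIF).trans hF
  rw [encard_insert_of_notMem hvI'] at hle
  exact ((ENat.add_one_le_iff hIfin.encard_lt_top.ne).1 hle).false

lemma mem_closure_insert_of_reflTransGen {r : α → α → Prop}
    (hr : ∀ u v, r u v → v ∈ M.closure (insert u X)) (hX : X ⊆ M.E) (hc : c ∈ M.E)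
    (hcy : Relation.ReflTransGen r c y) : y ∈ M.closure (insert c X) := by
  induction hcy with
  | refl => exact M.mem_closure_of_mem (mem_insert c X) (insert_subset hc hX)
  | tail _ hby ih =>
    refine M.closure_subset_closure_of_subset_closure (insert_subset ih ?_) (hr _ _ hby)
    exact M.subset_closure_of_subset (subset_insert c X) (insert_subset hc hX)

end Matroid

namespace PaperWMO

variable {α : Type*}

lemma cast_rk_eq_eRk {M : Matroid α} (hfin : M.E.Finite) (X : Set α) :
    (rk M X : ℕ∞) = M.eRk X := by
  obtain ⟨I, hI⟩ := M.exists_isBasis' X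
  have hIfin : I.Finite := hfin.subset hI.indep.subset_ground
  have hmax : IsGreatest {n : ℕ | ∃ J, M.Indep J ∧ J ⊆ X ∧ J.ncard = n} I.ncard := by
    refine ⟨⟨I, hI.indep, hI.subset, rfl⟩, ?_⟩
    rintro _ ⟨J, hJ, hJX, rfl⟩
    refine ENat.toNat_le_toNat ?_ hIfin.encard_lt_top.ne
    exact (hJ.encard_le_eRk_of_subset hJX).trans hI.eRk_eq_encard.le
  rw [rk, hmax.csSup_eq, hIfin.cast_ncard_eq, hI.eRk_eq_encard]

lemma IsFlat.matroid_isFlat {M : Matroid α} {F : Set α} (hfin : M.E.Finite) (hF : IsFlat M F) :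
    M.IsFlat F := by
  refine isFlat_iff_closure_eq.2 <| hF.2 _ (M.subset_closure F hF.1) (M.closure_subset_ground F) ?_
  exact_mod_cast (cast_rk_eq_eRk hfin _).trans
    ((M.eRk_closure_eq F).trans (cast_rk_eq_eRk hfin F).symm)

lemma Conn.loopless {M : Matroid α} (hM : Conn M) (hE : M.E.Nontrivial) : M.Loopless := by
  refine loopless_iff_forall_not_isLoop.2 fun e _ (hloop : M.IsLoop e) ↦ hM.2 ?_
  obtain ⟨f, hf, hfe⟩ := hE.exists_ne e
  refine ⟨_, _, _, ?_, ?_, hloop.eq_disjointSum⟩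
  · exact singleton_nonempty e
  · exact ⟨f, by simpa using ⟨hf, hfe⟩⟩

lemma mem_closure_insert_of_gAdj {M M' : Matroid α} {A B : Set α} {u v : α}
    (hfin : M.E.Finite) (hsub : ∀ B, M'.IsBase B → M.IsBase B) [M'.Loopless]
    (hA : M'.IsFlat A) (hAB : Disjoint A B) (hB : B ⊆ M'.E) (huv : gAdj M A B u v) :
    v ∈ M'.closure (insert u A) := by
  obtain ⟨hu, hv, -, F, hF, huF, hvF, a, haF, haA⟩ := huv
  have hua : u ≠ a := (hAB.ne_of_mem haA hu).symm
  have hu_cl : u ∉ M'.closure {a} := fun h ↦ hAB.notMem_of_mem_left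
    ((M'.closure_subset_closure (singleton_subset_iff.2 haA)).trans hA.closure.le h) hu
  have hind : M'.Indep {u, a} :=
    ((M'.isNonloop_of_loopless (hA.subset_ground haA)).indep.insert_indep_iff_of_notMem
      (by simpa using hua)).2 ⟨hB hu, hu_cl⟩
  have hF2 : M.eRk F ≤ ({u, a} : Set α).encard := by
    rw [encard_pair hua, ← cast_rk_eq_eRk hfin, hF.2.1]; rfl
  refine M'.closure_subset_closure (insert_subset_insert (singleton_subset_iff.2 haA)) ?_
  exact hind.mem_closure_of_insert_subset_of_eRk_le hsub (toFinite _)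
    (by simp [insert_subset_iff, *]) hF2 (hB hv)

theorem rank_of_flat_union_connected_set_general (M M' : Matroid α) (hfin : M.E.Finite)
    (hE : M'.E = M.E) (hconn' : Conn M')
    (hsub : ∀ B : Set α, M'.IsBase B → M.IsBase B)
    (A : Set α) (hflat : IsFlat M' A) (hrA : rk M' A = 1)
    (B : Set α) (hBE : B ⊆ M.E) (hdisj : Disjoint A B)
    (C : Set α) (hCne : C.Nonempty) (hCB : C ⊆ B)
    (hCconn : ∀ x ∈ C, ∀ y ∈ C,
      Relation.ReflTransGen (fun u v => u ∈ C ∧ v ∈ C ∧ gAdj M A B u v) x y) :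
    rk M' (A ∪ C) = 2 := by
  have hfin' : M'.E.Finite := hE ▸ hfin
  have hBE' : B ⊆ M'.E := hE ▸ hBE
  have hA := hflat.matroid_isFlat hfin'
  have hrA' : M'.eRk A = 1 := by rw [← cast_rk_eq_eRk hfin', hrA]; rfl
  obtain ⟨c, hc⟩ := hCne
  obtain ⟨a, ha⟩ : A.Nonempty := nonempty_iff_ne_empty.2 <| by rintro rfl; simp at hrA'
  have hcE : c ∈ M'.E := hBE' (hCB hc)
  have hcA : c ∉ M'.closure A := by rw [hA.closure]; exact hdisj.notMem_of_mem_right (hCB hc)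
  have : M'.Loopless :=
    hconn'.loopless ⟨a, hA.subset_ground ha, c, hcE, hdisj.ne_of_mem ha (hCB hc)⟩
  have hspan : A ∪ C ⊆ M'.closure (insert c A) := by
    refine union_subset (M'.subset_closure_of_subset (subset_insert c A)
      (insert_subset hcE hA.subset_ground)) fun y hy ↦ ?_
    refine mem_closure_insert_of_reflTransGen (fun u v huv ↦ ?_) hA.subset_ground hcE
      (hCconn c hc y hy)
    exact mem_closure_insert_of_gAdj hfin hsub hA hdisj hBE' huv.2.2
  have hrk : M'.eRk (A ∪ C) = 2 := calc
    M'.eRk (A ∪ C) = M'.eRk (insert c A) :=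
      ((M'.eRk_mono hspan).trans (M'.eRk_closure_eq _).le).antisymm
        (M'.eRk_mono (insert_subset (mem_union_right A hc) subset_union_left))
    _ = 2 := by rw [eRk_insert_eq_add_one ⟨hcE, hcA⟩, hrA']; rfl
  exact_mod_cast (cast_rk_eq_eRk hfin' _).trans hrk

/-- If `A` is a rank-1 flat of an included matroid `M'` and `C` is a nonempty set of
vertices of the graph `g(A,B)` on which the induced subgraph is connected, then
`A ∪ C` has rank 2 in `M'`. -/
theorem rank_of_flat_union_connected_set (M M' : Matroid α) (hfin : M.E.Finite)
    (hconn : Conn M) (hsimple : IsSimple M) (hrank : rk M M.E = 3)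
    (hE : M'.E = M.E) (hconn' : Conn M')
    (hsub : ∀ B : Set α, M'.IsBase B → M.IsBase B)
    (A : Set α) (hflat : IsFlat M' A) (hrA : rk M' A = 1)
    (B : Set α) (hBne : B.Nonempty) (hBE : B ⊆ M.E) (hdisj : Disjoint A B)
    (C : Set α) (hCne : C.Nonempty) (hCB : C ⊆ B)
    (hCconn : ∀ x ∈ C, ∀ y ∈ C,
      Relation.ReflTransGen (fun u v => u ∈ C ∧ v ∈ C ∧ gAdj M A B u v) x y) :
    rk M' (A ∪ C) = 2 :=
  rank_of_flat_union_connected_set_general M M' hfin hE hconn' hsub A hflat hrA B hBE hdisj C hCne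
    hCB hCconn

end PaperWMO
end
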